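/- For every ℓ ≥ 1 and k ≥ 2, the number N(k,ℓ) of admissible strings of length ℓ and information cost k equals 4·C(ℓ-1, k-ℓ-1)·2^(k-ℓ-1), with the convention that this is 0 when k-ℓ-1 ∉ {0,…,ℓ-1}. -/

import Mathlib

inductive Symb | A | B | C | D
deriving DecidableEq

def allowed : Symb → Symb → Prop
  | Symb.A, y => y = Symb.A ∨ y = Symb.C
  | Symb.B, y => y = Symb.B ∨ y = Symb.D
  | Symb.C, _ => True
  | Symb.D, _ => True

def isCD : Symb → Bool
  | Symb.C => true
  | Symb.D => true
  | _ => false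

def Admissible (xs : List Symb) : Prop := xs ≠ [] ∧ xs.Chain' allowed

def Mcount (xs : List Symb) : ℕ := xs.dropLast.countP isCD

/-- information cost K(x_1^n) = (n+1) + M(x_1^n) -/
def K (xs : List Symb) : ℕ := xs.length + 1 + Mcount xs

/-
Weight an admissible string by X ^ M. Prepending a symbol a to a nonempty string starting with y
multiplies the weight by X ^ [a ∈ {C, D}] when a → y is allowed, and these factors sum over a to
1 + 2X whatever y is. So the weights of the admissible strings of length l sum to
4 (1 + 2X) ^ (l - 1), whose coefficient of X ^ m is 4 C(l-1, m) 2 ^ m; and K = l + 1 + M.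
-/

open Finset Polynomial

instance : Fintype Symb :=
  ⟨{.A, .B, .C, .D}, fun x => by cases x <;> simp⟩

instance : DecidableRel allowed := fun x y => by
  cases x <;> unfold allowed <;> infer_instance

theorem Fintype.sum_list_ofFn_succ {α M : Type*} [Fintype α] [AddCommMonoid M]
    (g : List α → M) (n : ℕ) :
    ∑ f : Fin (n + 1) → α, g (List.ofFn f) = ∑ a, ∑ f : Fin n → α, g (a :: List.ofFn f) := by
  rw [← (Fin.consEquiv fun _ => α).sum_comp, Fintype.sum_prod_type]
  simp [Fin.consEquiv, List.ofFn_succ]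

theorem Nat.card_list_length_eq {α : Type*} (n : ℕ) (p : List α → Prop) :
    Nat.card {xs : List α // xs.length = n ∧ p xs} = Nat.card {f : Fin n → α // p (List.ofFn f)} :=
  Nat.card_congr <| (Equiv.subtypeSubtypeEquivSubtypeInter _ p).symm.trans <|
    (Equiv.vectorEquivFin α n).subtypeEquiv (p := fun v : List.Vector α n => p v.toList) fun v => by
      conv_lhs => rw [← List.Vector.ofFn_get v, List.Vector.toList_ofFn]
      rfl

theorem Polynomial.coeff_sum_ite_X_pow {ι R : Type*} [Semiring R] (s : Finset ι) (p : ι → Prop)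
    [DecidablePred p] (d : ι → ℕ) (m : ℕ) :
    (∑ i ∈ s, if p i then (X : R[X]) ^ d i else 0).coeff m = #{i ∈ s | p i ∧ d i = m} := by
  simp only [finsetSum_coeff, apply_ite (coeff · m), coeff_X_pow, coeff_zero]
  rw [← sum_boole]
  simp only [ite_and, eq_comm]

theorem Polynomial.coeff_one_add_C_mul_X_pow {R : Type*} [CommSemiring R] (r : R) (n m : ℕ) :
    ((1 + C r * X) ^ n).coeff m = n.choose m * r ^ m := by
  have : (1 + C r * X) ^ n = ((1 + X) ^ n).comp (C r * X) := by simp [add_comp]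
  rw [this, comp_C_mul_X_coeff, coeff_one_add_X_pow]

theorem Mcount_cons (a : Symb) {ys : List Symb} (hys : ys ≠ []) :
    Mcount (a :: ys) = Mcount ys + if isCD a then 1 else 0 := by
  rw [Mcount, List.dropLast_cons_of_ne_nil hys, List.countP_cons, Mcount]

noncomputable def weight (xs : List Symb) : ℕ[X] :=
  if xs.IsChain allowed then X ^ Mcount xs else 0

noncomputable def transitionWeight (a y : Symb) : ℕ[X] :=
  if allowed a y then X ^ (if isCD a then 1 else 0) else 0

theorem weight_cons (a : Symb) {ys : List Symb} (hys : ys ≠ []) :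
    weight (a :: ys) = transitionWeight a (ys.head hys) * weight ys := by
  obtain ⟨y, zs, rfl⟩ := List.exists_cons_of_ne_nil hys
  simp only [weight, transitionWeight, List.isChain_cons, Mcount_cons a hys, List.head?_cons,
    Option.mem_some_iff, forall_eq', List.head_cons, pow_add]
  split_ifs <;> simp_all [mul_comm]

-- Every symbol has exactly one predecessor in {A, B}, and both C and D may precede it.
theorem sum_transitionWeight (y : Symb) : ∑ a, transitionWeight a y = 1 + C 2 * X := by
  rw [show (univ : Finset Symb) = {.A, .B, .C, .D} from rfl]
  cases y <;> simp [transitionWeight, allowed, isCD, two_mul]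

noncomputable def mcountPoly (n : ℕ) : ℕ[X] := ∑ f : Fin n → Symb, weight (List.ofFn f)

theorem mcountPoly_succ {n : ℕ} (hn : n ≠ 0) :
    mcountPoly (n + 1) = (1 + C 2 * X) * mcountPoly n := by
  rw [mcountPoly, Fintype.sum_list_ofFn_succ, Finset.sum_comm, mcountPoly, Finset.mul_sum]
  refine Finset.sum_congr rfl fun f _ => ?_
  have hf : List.ofFn f ≠ [] := by simpa using hn
  simp_rw [weight_cons _ hf, ← Finset.sum_mul, sum_transitionWeight]

theorem mcountPoly_one : mcountPoly 1 = 4 := by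
  simp [mcountPoly, weight, Mcount, show Fintype.card Symb = 4 from rfl]

theorem mcountPoly_eq {n : ℕ} (hn : 1 ≤ n) : mcountPoly n = 4 * (1 + C 2 * X) ^ (n - 1) := by
  induction n, hn using Nat.le_induction with
  | base => simp [mcountPoly_one]
  | succ n hn ih =>
    rw [mcountPoly_succ (by omega), ih, mul_left_comm, ← pow_succ', Nat.sub_add_cancel hn,
      Nat.add_sub_cancel]

theorem coeff_mcountPoly (n m : ℕ) :
    (mcountPoly n).coeff m =
      #{f : Fin n → Symb | (List.ofFn f).IsChain allowed ∧ Mcount (List.ofFn f) = m} :=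
  coeff_sum_ite_X_pow _ _ _ m

theorem card_admissible_eq_coeff_mcountPoly {l : ℕ} (hl : 1 ≤ l) (m : ℕ) :
    Nat.card {xs : List Symb // xs.length = l ∧ Admissible xs ∧ K xs = l + 1 + m} =
      (mcountPoly l).coeff m := by
  have hiff (f : Fin l → Symb) : Admissible (List.ofFn f) ∧ K (List.ofFn f) = l + 1 + m ↔
      (List.ofFn f).IsChain allowed ∧ Mcount (List.ofFn f) = m := by
    have hne : List.ofFn f ≠ [] := by simpa using (by omega : l ≠ 0)
    simp only [Admissible, K, List.length_ofFn, ne_eq, hne, not_false_eq_true, true_and]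
    exact and_congr Iff.rfl (by omega)
  rw [Nat.card_list_length_eq, Nat.card_congr (Equiv.subtypeEquivRight hiff),
    Nat.card_eq_fintype_card, Fintype.card_subtype, coeff_mcountPoly]

theorem stmt5_general (l : ℕ) (hl : 1 ≤ l) (k : ℕ) :
    Nat.card {xs : List Symb // xs.length = l ∧ Admissible xs ∧ K xs = k}
      = if l + 1 ≤ k then 4 * Nat.choose (l - 1) (k - l - 1) * 2 ^ (k - l - 1) else 0 := by
  split_ifs with hlk
  · obtain ⟨m, rfl⟩ : ∃ m, k = l + 1 + m := ⟨k - l - 1, by omega⟩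
    rw [card_admissible_eq_coeff_mcountPoly hl, mcountPoly_eq hl, coeff_ofNat_mul,
      coeff_one_add_C_mul_X_pow, Nat.cast_id, ← mul_assoc, show l + 1 + m - l - 1 = m by omega]
  · have : IsEmpty {xs : List Symb // xs.length = l ∧ Admissible xs ∧ K xs = k} :=
      ⟨fun ⟨xs, hlen, _, hK⟩ => hlk (by rw [← hK, K, hlen]; omega)⟩
    exact Nat.card_of_isEmpty

theorem stmt5 (l : ℕ) (hl : 1 ≤ l) (k : ℕ) (hk : 2 ≤ k) :
    Nat.card {xs : List Symb // xs.length = l ∧ Admissible xs ∧ K xs = k}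
      = if l + 1 ≤ k then 4 * Nat.choose (l - 1) (k - l - 1) * 2 ^ (k - l - 1) else 0 :=
  stmt5_general l hl k
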